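/- Let μ be a probability measure on M and r ≥ 0 a real number. Then there exists a map X from the real interval [0,1] to probability measures on M such that X(0) = δ_1, X(1) = e^{r(μ⋆−1)}, and X(s+t) = X(s) ⋆ X(t) whenever s, t, s+t ∈ [0,1]; that is, there is a Lévy process with respect to the timeline [0,1] corresponding to the convolution exponential e^{r(μ⋆−1)}. Indeed, X(t) = e^{t·r(μ⋆−1)} is such a process. -/

import Mathlib

open MeasureTheory

/-- n-fold convolution power, with `μ^{*0} = δ_1`. -/
noncomputable def mconvPow {M : Type*} [Monoid M] [MeasurableSpace M]
    (μ : Measure M) : ℕ → Measure M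
  | 0 => Measure.dirac 1
  | n + 1 => Measure.mconv (mconvPow μ n) μ

/-- The convolution exponential `e^{r(μ⋆−1)} = e^{−r} ∑ (r^n/n!) • μ^{*n}`. -/
noncomputable def convExp {M : Type*} [Monoid M] [MeasurableSpace M]
    (μ : Measure M) (r : ℝ) : Measure M :=
  ENNReal.ofReal (Real.exp (-r)) •
    Measure.sum fun n => ENNReal.ofReal (r ^ n / n.factorial) • mconvPow μ n

/-!
For the exponential series `S(r) = ∑ (rⁿ/n!) • μ^{*n}` (`convExpSeries`), the Cauchy product,
`μ^{*m} ⋆ μ^{*n} = μ^{*(m+n)}` and the binomial theorem give `S(a) ⋆ S(b) = S(a + b)`; with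
`e^{-a} e^{-b} = e^{-(a+b)}` this makes `t ↦ e^{t·r(μ⋆−1)}` a convolution semigroup, and its total
mass is `e^{-r} e^{r} = 1`. The coefficients are cast through `ENNReal.ofReal`, which truncates
negative reals, so the rates must be nonnegative.
-/

open Finset

theorem ENNReal.tsum_tsum_eq_tsum_sum_antidiagonal {A : Type*} [AddCommMonoid A]
    [HasAntidiagonal A] (F : A → A → ENNReal) :
    ∑' n, ∑' m, F n m = ∑' k, ∑ p ∈ antidiagonal k, F p.1 p.2 := by
  rw [← ENNReal.tsum_prod, ← HasAntidiagonal.sigmaAntidiagonalEquivProd.tsum_eq,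
    ENNReal.tsum_sigma']
  refine tsum_congr fun k => ?_
  rw [← Finset.tsum_subtype]
  rfl

theorem sum_antidiagonal_pow_div_factorial {𝕜 : Type*} [Field 𝕜] [CharZero 𝕜] (a b : 𝕜)
    (k : ℕ) :
    ∑ p ∈ antidiagonal k, a ^ p.1 / p.1.factorial * (b ^ p.2 / p.2.factorial) =
      (a + b) ^ k / k.factorial := by
  rw [(Commute.all a b).add_pow', Finset.sum_div]
  refine Finset.sum_congr rfl fun p hp => ?_
  rw [← HasAntidiagonal.mem_antidiagonal.mp hp, nsmul_eq_mul, Nat.cast_add_choose]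
  field_simp [Nat.factorial_ne_zero]

theorem ofReal_sum_antidiagonal_pow_div_factorial {a b : ℝ} (ha : 0 ≤ a) (hb : 0 ≤ b) (k : ℕ) :
    ∑ p ∈ antidiagonal k,
        ENNReal.ofReal (a ^ p.1 / p.1.factorial) * ENNReal.ofReal (b ^ p.2 / p.2.factorial) =
      ENNReal.ofReal ((a + b) ^ k / k.factorial) := by
  rw [← sum_antidiagonal_pow_div_factorial, ENNReal.ofReal_sum_of_nonneg (fun _ _ => by positivity)]
  exact Finset.sum_congr rfl fun p _ => (ENNReal.ofReal_mul (by positivity)).symm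

namespace MeasureTheory.Measure

variable {M : Type*} [Monoid M] [MeasurableSpace M] [MeasurableMul₂ M]

theorem sum_mconv {ι : Type*} (m : ι → Measure M) (ν : Measure M) [SFinite ν] :
    Measure.sum m ∗ₘ ν = Measure.sum fun i => m i ∗ₘ ν := by
  rw [mconv, prod_sum_left, map_sum (by fun_prop)]
  rfl

theorem mconv_sum {ι : Type*} [Countable ι] (μ : Measure M) (m : ι → Measure M) [SFinite μ]
    [∀ i, SFinite (m i)] :
    μ ∗ₘ Measure.sum m = Measure.sum fun i => μ ∗ₘ m i := by
  rw [mconv, prod_sum_right, map_sum (by fun_prop)]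
  rfl

end MeasureTheory.Measure

section

variable {M : Type*} [Monoid M] [MeasurableSpace M]

instance isProbabilityMeasure_mconvPow [MeasurableMul₂ M] (μ : Measure M) [IsProbabilityMeasure μ]
    (n : ℕ) : IsProbabilityMeasure (mconvPow μ n) := by
  induction n with
  | zero => rw [mconvPow]; infer_instance
  | succ n ih => rw [mconvPow]; infer_instance

instance sFinite_mconvPow (μ : Measure M) [SFinite μ] (n : ℕ) : SFinite (mconvPow μ n) := by
  induction n with
  | zero => rw [mconvPow]; infer_instance
  | succ n ih => rw [mconvPow]; infer_instance

theorem mconvPow_add [MeasurableMul₂ M] (μ : Measure M) [SFinite μ] (m n : ℕ) :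
    mconvPow μ (m + n) = mconvPow μ m ∗ₘ mconvPow μ n := by
  induction n with
  | zero => exact (Measure.mconv_dirac_one _).symm
  | succ n ih => rw [← add_assoc, mconvPow, mconvPow, ih, Measure.mconv_assoc]

noncomputable def convExpSeries (μ : Measure M) (r : ℝ) : Measure M :=
  Measure.sum fun n => ENNReal.ofReal (r ^ n / n.factorial) • mconvPow μ n

instance sFinite_convExpSeries (μ : Measure M) [SFinite μ] (r : ℝ) :
    SFinite (convExpSeries μ r) := by
  rw [convExpSeries]
  infer_instance

theorem convExp_eq_smul_convExpSeries (μ : Measure M) (r : ℝ) :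
    convExp μ r = ENNReal.ofReal (Real.exp (-r)) • convExpSeries μ r := rfl

theorem convExpSeries_add [MeasurableMul₂ M] (μ : Measure M) [SFinite μ] {a b : ℝ}
    (ha : 0 ≤ a) (hb : 0 ≤ b) :
    convExpSeries μ (a + b) = convExpSeries μ a ∗ₘ convExpSeries μ b := by
  ext s hs
  rw [convExpSeries, convExpSeries, convExpSeries, Measure.sum_mconv]
  simp only [Measure.mconv_sum, Measure.mconv_smul_left,
    Measure.mconv_smul_right, ← mconvPow_add, Measure.sum_apply _ hs, Measure.smul_apply,
    smul_eq_mul]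
  rw [ENNReal.tsum_tsum_eq_tsum_sum_antidiagonal]
  refine tsum_congr fun k => ?_
  rw [← ofReal_sum_antidiagonal_pow_div_factorial ha hb, Finset.sum_mul]
  refine Finset.sum_congr rfl fun p hp => ?_
  rw [HasAntidiagonal.mem_antidiagonal.mp hp, mul_assoc, mul_left_comm]

theorem convExpSeries_zero (μ : Measure M) : convExpSeries μ 0 = Measure.dirac 1 := by
  ext s hs
  rw [convExpSeries, Measure.sum_apply _ hs, tsum_eq_single 0 fun n hn => by simp [hn]]
  simp [mconvPow]

theorem convExpSeries_apply_univ [MeasurableMul₂ M] (μ : Measure M) [IsProbabilityMeasure μ]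
    {r : ℝ} (hr : 0 ≤ r) : convExpSeries μ r Set.univ = ENNReal.ofReal (Real.exp r) := by
  simp only [convExpSeries, Measure.sum_apply _ MeasurableSet.univ, Measure.smul_apply,
    measure_univ, smul_eq_mul, mul_one]
  rw [← ENNReal.ofReal_tsum_of_nonneg (fun n => by positivity) (Real.summable_pow_div_factorial r),
    Real.exp_eq_exp_ℝ, NormedSpace.exp_eq_tsum_div]

theorem convExp_zero (μ : Measure M) : convExp μ 0 = Measure.dirac 1 := by
  rw [convExp_eq_smul_convExpSeries, convExpSeries_zero, neg_zero, Real.exp_zero,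
    ENNReal.ofReal_one, one_smul]

theorem convExp_add [MeasurableMul₂ M] (μ : Measure M) [SFinite μ] {a b : ℝ}
    (ha : 0 ≤ a) (hb : 0 ≤ b) :
    convExp μ (a + b) = convExp μ a ∗ₘ convExp μ b := by
  simp only [convExp_eq_smul_convExpSeries]
  rw [Measure.mconv_smul_left, Measure.mconv_smul_right, smul_smul,
    ← ENNReal.ofReal_mul (Real.exp_nonneg _), ← Real.exp_add, ← convExpSeries_add μ ha hb,
    neg_add]

theorem isProbabilityMeasure_convExp [MeasurableMul₂ M] (μ : Measure M) [IsProbabilityMeasure μ]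
    {r : ℝ} (hr : 0 ≤ r) : IsProbabilityMeasure (convExp μ r) := by
  constructor
  rw [convExp_eq_smul_convExpSeries, Measure.smul_apply, convExpSeries_apply_univ μ hr,
    smul_eq_mul, ← ENNReal.ofReal_mul (Real.exp_nonneg _), ← Real.exp_add, neg_add_cancel,
    Real.exp_zero, ENNReal.ofReal_one]

end

theorem stmt13 {M : Type*} [CommMonoid M] [MeasurableSpace M] [MeasurableMul₂ M]
    (μ : Measure M) [IsProbabilityMeasure μ] (r : ℝ) (hr : 0 ≤ r) :
    ∃ X : ℝ → Measure M,
      (∀ t ∈ Set.Icc (0 : ℝ) 1, IsProbabilityMeasure (X t)) ∧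
      X 0 = Measure.dirac 1 ∧
      X 1 = convExp μ r ∧
      (∀ s t : ℝ, s ∈ Set.Icc (0 : ℝ) 1 → t ∈ Set.Icc (0 : ℝ) 1 →
        s + t ∈ Set.Icc (0 : ℝ) 1 → X (s + t) = Measure.mconv (X s) (X t)) ∧
      ∀ t ∈ Set.Icc (0 : ℝ) 1, X t = convExp μ (t * r) := by
  refine ⟨fun t => convExp μ (t * r), fun t ht => isProbabilityMeasure_convExp μ
    (mul_nonneg ht.1 hr), by simp only [zero_mul, convExp_zero], by simp only [one_mul],
    fun s t hs ht _ => ?_, fun _ _ => rfl⟩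
  simp only [add_mul, convExp_add μ (mul_nonneg hs.1 hr) (mul_nonneg ht.1 hr)]
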